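/- Let f : ℂ → ℂ be an entire function and let (Eₙ)_{n ≥ 0} be a sequence of nonempty compact subsets of ℂ such that Eₙ₊₁ ⊆ f(Eₙ) for all n ≥ 0. Then there exists ζ ∈ ℂ such that fⁿ(ζ) ∈ Eₙ for all n ≥ 0. Moreover, if f is a transcendental entire function and Eₙ ∩ J(f) ≠ ∅ for all n ≥ 0, then ζ can be chosen to lie in J(f). -/

import Mathlib

open Set Filter Topology Bornology Metric

noncomputable section

noncomputable instance : UniformSpace (OnePoint ℂ) := uniformSpaceOfCompactR1

/-- The family of iterates of `f` is normal on `V`. -/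
def IterNormalOn (f : ℂ → ℂ) (V : Set ℂ) : Prop :=
  ∀ k : ℕ → ℕ, ∃ s : ℕ → ℕ, StrictMono s ∧ ∃ g : ℂ → OnePoint ℂ,
    TendstoLocallyUniformlyOn
      (fun n z => ((f^[k (s n)] z : ℂ) : OnePoint ℂ)) g atTop V

/-- The Fatou set of `f`. -/
def fatouSet (f : ℂ → ℂ) : Set ℂ :=
  {z | ∃ V : Set ℂ, IsOpen V ∧ z ∈ V ∧ IterNormalOn f V}

/-- The Julia set of `f`. -/
def juliaSet (f : ℂ → ℂ) : Set ℂ := (fatouSet f)ᶜ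

/-- The escaping set of `f`. -/
def escapingSet (f : ℂ → ℂ) : Set ℂ :=
  {z | Tendsto (fun n => ‖f^[n] z‖) atTop atTop}

/-- `f` is a transcendental entire function. -/
def TranscendentalEntire (f : ℂ → ℂ) : Prop :=
  Differentiable ℂ f ∧ ∀ p : Polynomial ℂ, f ≠ fun z => p.eval z

/-- The maximum modulus `M(r, f)`. -/
def maxMod (f : ℂ → ℂ) (r : ℝ) : ℝ :=
  sSup ((fun z => ‖f z‖) '' Metric.sphere (0 : ℂ) r)

/-- `R(f)`, the least `R` such that `M(r) > r` for `r ≥ R`. -/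
def Rf (f : ℂ → ℂ) : ℝ :=
  sInf {R : ℝ | 0 ≤ R ∧ ∀ r ≥ R, maxMod f r > r}

/-- The set `A_R(f)`. -/
def ARset (f : ℂ → ℂ) (R : ℝ) : Set ℂ :=
  {z | ∀ n : ℕ, (maxMod f)^[n] R ≤ ‖f^[n] z‖}

/-- The fast escaping set `A(f)`. -/
def fastEscaping (f : ℂ → ℂ) : Set ℂ :=
  {z | ∃ R > Rf f, ∃ l : ℕ, f^[l] z ∈ ARset f R}

/-- The collection of connected components of a subset of `ℂ`. -/
def components (S : Set ℂ) : Set (Set ℂ) :=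
  {C | ∃ z ∈ S, C = connectedComponentIn S z}

/-- `S` is an (infinite) spider's web. -/
def SpidersWeb (S : Set ℂ) : Prop :=
  IsConnected S ∧ ∃ G : ℕ → Set ℂ,
    (∀ n, IsOpen (G n)) ∧ (∀ n, IsBounded (G n)) ∧
    (∀ n, SimplyConnectedSpace (G n)) ∧
    (∀ n, G n ⊆ G (n + 1)) ∧ (∀ n, frontier (G n) ⊆ S) ∧
    (⋃ n, G n) = Set.univ

/-- An unbounded continuum: a closed, connected, unbounded subset of `ℂ`. -/
def UnboundedContinuum (Γ : Set ℂ) : Prop :=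
  IsClosed Γ ∧ IsConnected Γ ∧ ¬ IsBounded Γ

/-- `U` is a Fatou component of `f`. -/
def FatouComponent (f : ℂ → ℂ) (U : Set ℂ) : Prop :=
  ∃ z ∈ fatouSet f, U = connectedComponentIn (fatouSet f) z

/-- `U` is a multiply connected wandering domain of `f`. -/
def MultiplyConnectedWanderingDomain (f : ℂ → ℂ) (U : Set ℂ) : Prop :=
  FatouComponent f U ∧ ¬ SimplyConnectedSpace U

/-- `U` has infinite inner connectivity. -/
def InfiniteInnerConnectivity (f : ℂ → ℂ) (U : Set ℂ) : Prop :=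
  ∃ z₀ ∈ U, ∃ N : ℕ, ∀ n ≥ N,
    (components ((f^[n] '' U ∩ {z | ‖z‖ < ‖f^[n] z₀‖})ᶜ)).Infinite

/-! The points whose orbit passes through `E₀, …, Eₙ` form a decreasing sequence of compact
sets, nonempty because `Eₙ₊₁ ⊆ f(Eₙ)`, so their intersection is nonempty. For the second part apply
this to `Eₙ ∩ J(f)`: these sets are compact as `J(f)` is closed, and `Eₙ₊₁ ∩ J(f) ⊆ f(Eₙ ∩ J(f))`
because a transcendental entire function is an open map and so maps the Fatou set into itself. -/

theorem subset_iterate_image_of_subset_image {X : Type*} {f : X → X} {E : ℕ → Set X}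
    (hsub : ∀ n, E (n + 1) ⊆ f '' E n) (n : ℕ) :
    E n ⊆ f^[n] '' ⋂ k ≤ n, f^[k] ⁻¹' E k := by
  induction n with
  | zero => intro x hx; exact ⟨x, by simpa using hx, rfl⟩
  | succ n ih =>
    rintro _ hy
    obtain ⟨x, hx, rfl⟩ := hsub n hy
    obtain ⟨z, hz, rfl⟩ := ih hx
    refine ⟨z, ?_, Function.iterate_succ_apply' f n z⟩
    simp only [mem_iInter, mem_preimage] at hz ⊢
    intro k hk
    rcases Nat.le_succ_iff.1 hk with hk | rfl
    · exact hz k hk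
    · rwa [Function.iterate_succ_apply']

theorem exists_orbit_mem_of_subset_image {X : Type*} [TopologicalSpace X] [T2Space X]
    {f : X → X} (hf : Continuous f) {E : ℕ → Set X} (hne : ∀ n, (E n).Nonempty)
    (hcpt : ∀ n, IsCompact (E n)) (hsub : ∀ n, E (n + 1) ⊆ f '' E n) :
    ∃ x, ∀ n, f^[n] x ∈ E n := by
  set K : ℕ → Set X := fun n => ⋂ k ≤ n, f^[k] ⁻¹' E k
  have hK_closed : ∀ n, IsClosed (K n) := fun n =>
    isClosed_biInter fun k _ => (hcpt k).isClosed.preimage (hf.iterate k)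
  have hK_anti : ∀ n, K (n + 1) ⊆ K n := fun n =>
    biInter_subset_biInter_left fun k (hk : k ≤ n) => hk.trans n.le_succ
  have hK_ne : ∀ n, (K n).Nonempty := fun n =>
    ((hne n).mono (subset_iterate_image_of_subset_image hsub n)).of_image
  have hK₀ : IsCompact (K 0) := (hcpt 0).of_isClosed_subset (hK_closed 0)
    (biInter_subset_of_mem (le_refl 0))
  obtain ⟨x, hx⟩ := IsCompact.nonempty_iInter_of_sequence_nonempty_isCompact_isClosed K hK_anti
    hK_ne hK₀ hK_closed
  exact ⟨x, fun n => mem_iInter₂.1 (mem_iInter.1 hx n) n le_rfl⟩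

theorem TendstoLocallyUniformlyOn.of_comp_isOpenMap {α β γ ι : Type*} [TopologicalSpace α]
    [TopologicalSpace β] [UniformSpace γ] {p : Filter ι} {F : ι → β → γ} {G : β → γ}
    {f : α → β} (hf : IsOpenMap f) {V : Set α} (hV : IsOpen V)
    (h : TendstoLocallyUniformlyOn (fun i => F i ∘ f) (G ∘ f) p V) :
    TendstoLocallyUniformlyOn F G p (f '' V) := by
  rintro u hu _ ⟨z, hz, rfl⟩
  obtain ⟨t, ht, hev⟩ := h u hu z hz
  rw [nhdsWithin_eq_nhds.2 (hV.mem_nhds hz)] at ht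
  obtain ⟨t', ht't, ht'_open, hzt'⟩ := _root_.mem_nhds_iff.1 (inter_mem ht (hV.mem_nhds hz))
  refine ⟨f '' t', mem_nhdsWithin_of_mem_nhds
    ((hf t' ht'_open).mem_nhds (mem_image_of_mem f hzt')), hev.mono ?_⟩
  rintro i hi _ ⟨x, hx, rfl⟩
  exact hi x (ht't hx).1

theorem IterNormalOn.image {f : ℂ → ℂ} (hf : IsOpenMap f) {V : Set ℂ} (hV : IsOpen V)
    (h : IterNormalOn f V) : IterNormalOn f (f '' V) := by
  intro k
  obtain ⟨s, hs, g, hg⟩ := h (fun n => k n + 1)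
  -- The limit on `f '' V` is the pointwise one; on `V` it is `g ∘ f` since `fᵏ⁺¹ = fᵏ ∘ f`.
  set G : ℂ → OnePoint ℂ := fun w => limUnder atTop fun n => ((f^[k (s n)] w : ℂ) : OnePoint ℂ)
  have hgG : EqOn g (G ∘ f) V := fun z hz => ((hg.tendsto_at hz).limUnder_eq).symm
  exact ⟨s, hs, G, (hg.congr_right hgG).of_comp_isOpenMap hf hV⟩

theorem isOpen_fatouSet (f : ℂ → ℂ) : IsOpen (fatouSet f) := by
  rw [isOpen_iff_forall_mem_open]
  rintro z ⟨V, hV, hzV, hN⟩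
  exact ⟨V, fun w hw => ⟨V, hV, hw, hN⟩, hV, hzV⟩

theorem isClosed_juliaSet (f : ℂ → ℂ) : IsClosed (juliaSet f) :=
  (isOpen_fatouSet f).isClosed_compl

theorem mem_juliaSet_of_apply_mem {f : ℂ → ℂ} (hf : IsOpenMap f) {z : ℂ}
    (hz : f z ∈ juliaSet f) : z ∈ juliaSet f := by
  rintro ⟨V, hV, hzV, hN⟩
  exact hz ⟨f '' V, hf V hV, mem_image_of_mem f hzV, hN.image hf hV⟩

theorem TranscendentalEntire.isOpenMap {f : ℂ → ℂ} (hf : TranscendentalEntire f) :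
    IsOpenMap f := by
  refine (AnalyticOnNhd.is_constant_or_isOpenMap fun z _ => hf.1.analyticAt z).resolve_left ?_
  rintro ⟨w, hw⟩
  exact hf.2 (Polynomial.C w) (funext fun z => by simp [hw])

/-- Lemma 7.5 (topological lemma): if `Eₙ₊₁ ⊆ f(Eₙ)` for compact nonempty sets,
there is a point whose orbit visits the `Eₙ`; it can be taken in `J(f)` if each
`Eₙ` meets `J(f)` and `f` is transcendental. -/
theorem orbit_through_compact_sets
    (f : ℂ → ℂ) (hf : Differentiable ℂ f) (E : ℕ → Set ℂ)
    (hne : ∀ n, (E n).Nonempty) (hcpt : ∀ n, IsCompact (E n))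
    (hsub : ∀ n, E (n + 1) ⊆ f '' E n) :
    (∃ ζ : ℂ, ∀ n, f^[n] ζ ∈ E n) ∧
    (TranscendentalEntire f → (∀ n, (E n ∩ juliaSet f).Nonempty) →
      ∃ ζ ∈ juliaSet f, ∀ n, f^[n] ζ ∈ E n) := by
  refine ⟨exists_orbit_mem_of_subset_image hf.continuous hne hcpt hsub, fun htr hJ => ?_⟩
  have hsubJ : ∀ n, E (n + 1) ∩ juliaSet f ⊆ f '' (E n ∩ juliaSet f) := by
    rintro n _ ⟨hy, hyJ⟩
    obtain ⟨x, hx, rfl⟩ := hsub n hy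
    exact ⟨x, ⟨hx, mem_juliaSet_of_apply_mem htr.isOpenMap hyJ⟩, rfl⟩
  obtain ⟨ζ, hζ⟩ := exists_orbit_mem_of_subset_image hf.continuous hJ
    (fun n => (hcpt n).inter_right (isClosed_juliaSet f)) hsubJ
  exact ⟨ζ, by simpa using (hζ 0).2, fun n => (hζ n).1⟩

end
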